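/- Let μ be a nonzero finite Borel measure on ℝ whose support is a compact subset of (0,∞), let t = μ(ℝ) > 0, let ψ(z) = ∫ z·x/(1 − z·x) dμ(x) for z < 0, and let ψ^{(−1)} : (−t, 0) → (−∞, 0) denote the inverse of the bijection ψ : (−∞,0) → (−t,0). Then the improper integral ∫_{−t}^0 log(−ψ^{(−1)}(u)) du converges, and ∫ log x dμ(x) = −∫_{−t}^0 log(−ψ^{(−1)}(u)) du. -/

import Mathlib

/-!
Substituting `u = ψ(-w)` with `w > 0`, and using `χ(ψ(-w)) = -w` and
`-ψ'(-w) = ∫ x / (1 + w x)² dμ(x)`, the integral of `log (-χ)` over `(-t, 0)` becomes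
`∫₀^∞ log w ∫ x / (1 + w x)² dμ(x) dw`. By Fubini it remains to see that
`∫₀^∞ log w · x / (1 + w x)² dw = -log x` for `x > 0`: the primitive
`w log w · x / (1 + w x) - log (1 + w x)` vanishes at `0` and tends to `-log x` at `∞`.
Fubini applies because for `x ∈ [a, b] ⊆ (0, ∞)` the kernel is dominated by `b / a` times
its value at `x = a`.
-/

open Real MeasureTheory Filter Set Topology

noncomputable def logKernel (x w : ℝ) : ℝ := x / (1 + w * x) ^ 2 * log w

noncomputable def logKernelAntideriv (x w : ℝ) : ℝ :=
  w * log w * (x / (1 + w * x)) - log (1 + w * x)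

lemma hasDerivAt_logKernelAntideriv {x w : ℝ} (hx : 0 ≤ x) (hw : 0 < w) :
    HasDerivAt (logKernelAntideriv x) (logKernel x w) w := by
  have hden : 1 + w * x ≠ 0 := by positivity
  have hlin : HasDerivAt (fun w => 1 + w * x) x w := by
    simpa using ((hasDerivAt_id w).mul_const x).const_add 1
  have hquot : HasDerivAt (fun w => x / (1 + w * x)) (-(x * x) / (1 + w * x) ^ 2) w := by
    simpa using (hasDerivAt_const w x).fun_div hlin hden
  refine (((hasDerivAt_mul_log hw.ne').fun_mul hquot).fun_sub (hlin.log hden)).congr_deriv ?_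
  rw [logKernel]
  field_simp
  ring

lemma continuousOn_logKernelAntideriv {x : ℝ} (hx : 0 ≤ x) :
    ContinuousOn (logKernelAntideriv x) (Ici 0) := by
  intro w hw
  have hden : 1 + w * x ≠ 0 := by have : (0:ℝ) ≤ w := hw; positivity
  have hlin : ContinuousAt (fun w => 1 + w * x) w := by fun_prop
  exact ((continuous_mul_log.continuousAt.mul (continuousAt_const.div hlin hden)).sub
    (hlin.log hden)).continuousWithinAt

@[simp]
lemma logKernelAntideriv_zero (x : ℝ) : logKernelAntideriv x 0 = 0 := by
  simp [logKernelAntideriv]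

lemma tendsto_logKernelAntideriv_atTop {x : ℝ} (hx : 0 < x) :
    Tendsto (logKernelAntideriv x) atTop (𝓝 (-log x)) := by
  have hrewrite : (fun w => log (w / (1 + w * x)) - log w / w * (w / (1 + w * x)))
      =ᶠ[atTop] logKernelAntideriv x := by
    filter_upwards [eventually_gt_atTop 0] with w hw
    have hden : 0 < 1 + w * x := by positivity
    rw [logKernelAntideriv, log_div hw.ne' hden.ne']
    field_simp
    ring
  have hratio : Tendsto (fun w => w / (1 + w * x)) atTop (𝓝 x⁻¹) := by
    have : Tendsto (fun w : ℝ => (w⁻¹ + x)⁻¹) atTop (𝓝 (0 + x)⁻¹) :=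
      ((tendsto_inv_atTop_zero.add_const x).inv₀ (by simpa using hx.ne'))
    rw [zero_add] at this
    refine this.congr' ?_
    filter_upwards [eventually_gt_atTop 0] with w hw
    field_simp
  have := ((continuousAt_log (inv_ne_zero hx.ne')).tendsto.comp hratio).sub
    (isLittleO_log_id_atTop.tendsto_div_nhds_zero.mul hratio)
  rw [log_inv, zero_mul, sub_zero] at this
  exact this.congr' hrewrite

lemma integrableOn_logKernel {x : ℝ} (hx : 0 < x) :
    IntegrableOn (logKernel x) (Ioi 0) := by
  have hderiv : ∀ w ∈ Ioi (0 : ℝ), HasDerivAt (logKernelAntideriv x) (logKernel x w) w :=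
    fun w hw => hasDerivAt_logKernelAntideriv hx.le hw
  rw [← Ioc_union_Ioi_eq_Ioi zero_le_one]
  refine IntegrableOn.union ?_ ?_
  · have := intervalIntegral.integrableOn_deriv_of_nonneg
      (continuousOn_logKernelAntideriv hx.le |>.mono Icc_subset_Ici_self).neg
      (fun w hw => (hderiv w hw.1).neg)
      (fun w hw => neg_nonneg.2 <| mul_nonpos_of_nonneg_of_nonpos (by positivity)
        (log_nonpos hw.1.le hw.2.le))
    simpa using this.neg
  · exact integrableOn_Ioi_deriv_of_nonneg
      ((continuousOn_logKernelAntideriv hx.le 1 (by norm_num)).mono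
        (Ici_subset_Ici.2 zero_le_one))
      (fun w (hw : 1 < w) => hderiv w (zero_lt_one.trans hw))
      (fun w hw => mul_nonneg (by positivity) (log_nonneg (le_of_lt hw)))
      (tendsto_logKernelAntideriv_atTop hx)

lemma integral_logKernel {x : ℝ} (hx : 0 < x) :
    ∫ w in Ioi 0, logKernel x w = -log x := by
  rw [integral_Ioi_of_hasDerivAt_of_tendsto
    (continuousOn_logKernelAntideriv hx.le 0 self_mem_Ici)
    (fun w hw => hasDerivAt_logKernelAntideriv hx.le hw)
    (integrableOn_logKernel hx) (tendsto_logKernelAntideriv_atTop hx),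
    logKernelAntideriv_zero, sub_zero]

lemma norm_logKernel_le {a b x w : ℝ} (ha : 0 < a) (hx : x ∈ Icc a b) (hw : 0 < w) :
    ‖logKernel x w‖ ≤ b / a * ‖logKernel a w‖ := by
  have hx0 : 0 < x := ha.trans_le hx.1
  have hfactor : x / (1 + w * x) ^ 2 ≤ b / a * (a / (1 + w * a) ^ 2) := by
    rw [div_mul_div_cancel₀ ha.ne']
    gcongr
    exacts [hx0.le.trans hx.2, hx.2, hx.1]
  rw [logKernel, logKernel, norm_mul, norm_mul,
    Real.norm_of_nonneg (by positivity : 0 ≤ x / (1 + w * x) ^ 2),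
    Real.norm_of_nonneg (by positivity : 0 ≤ a / (1 + w * a) ^ 2), ← mul_assoc]
  gcongr

section Fubini

variable {μ : Measure ℝ} [IsFiniteMeasure μ] {a b : ℝ}

lemma integrable_logKernel_prod (ha : 0 < a) (hμ : ∀ᵐ x ∂μ, x ∈ Icc a b) :
    Integrable (Function.uncurry fun w x => logKernel x w)
      ((volume.restrict (Ioi 0)).prod μ) := by
  refine Integrable.mono' (((integrableOn_logKernel ha).norm.const_mul (b / a)).comp_fst μ)
    (Measurable.aestronglyMeasurable (by unfold logKernel; fun_prop)) ?_
  filter_upwards [Measure.quasiMeasurePreserving_fst.ae (ae_restrict_mem measurableSet_Ioi),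
    Measure.quasiMeasurePreserving_snd.ae hμ] with p hw hx
  exact norm_logKernel_le ha hx hw

lemma integrableOn_integral_logKernel (ha : 0 < a) (hμ : ∀ᵐ x ∂μ, x ∈ Icc a b) :
    IntegrableOn (fun w => (∫ x, x / (1 + w * x) ^ 2 ∂μ) * log w) (Ioi 0) := by
  simp_rw [← integral_mul_const]
  exact (integrable_logKernel_prod ha hμ).integral_prod_left

lemma integral_integral_logKernel (ha : 0 < a) (hμ : ∀ᵐ x ∂μ, x ∈ Icc a b) :
    ∫ w in Ioi 0, (∫ x, x / (1 + w * x) ^ 2 ∂μ) * log w = -∫ x, log x ∂μ := by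
  simp_rw [← integral_mul_const]
  change ∫ w in Ioi 0, ∫ x, logKernel x w ∂μ = _
  rw [integral_integral_swap (integrable_logKernel_prod ha hμ), ← integral_neg]
  exact integral_congr_ae (hμ.mono fun x hx => integral_logKernel (ha.trans_le hx.1))

end Fubini

lemma integral_pos_of_ae_pos {α : Type*} [MeasurableSpace α] {μ : Measure α} {f : α → ℝ}
    (hμ : μ ≠ 0) (hf : ∀ᵐ x ∂μ, 0 < f x) (hfi : Integrable f μ) : 0 < ∫ x, f x ∂μ := by
  have hnull : μ (Function.support f)ᶜ = 0 := ae_iff.1 (hf.mono fun x hx => hx.ne')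
  rw [integral_pos_iff_support_of_nonneg_ae (hf.mono fun x hx => hx.le) hfi,
    measure_congr (ae_eq_univ.2 hnull)]
  exact Measure.measure_univ_pos.2 hμ

noncomputable def psiFunction (μ : Measure ℝ) (z : ℝ) : ℝ := ∫ x, z * x / (1 - z * x) ∂μ

section psiFunction

variable {μ : Measure ℝ} [IsFiniteMeasure μ] {z : ℝ}

lemma integrable_psiFunction_integrand (hμ : ∀ᵐ x ∂μ, 0 ≤ x) (hz : z ≤ 0) :
    Integrable (fun x => z * x / (1 - z * x)) μ := by
  refine Integrable.mono' (integrable_const 1) (Measurable.aestronglyMeasurable (by fun_prop)) ?_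
  filter_upwards [hμ] with x hx
  have hzx : z * x ≤ 0 := mul_nonpos_of_nonpos_of_nonneg hz hx
  rw [Real.norm_eq_abs, abs_div, abs_of_nonpos hzx, abs_of_pos (by linarith),
    div_le_one (by linarith)]
  linarith

lemma psiFunction_mem_Ioo (hμ0 : μ ≠ 0) (hμ : ∀ᵐ x ∂μ, 0 < x) (hz : z < 0) :
    psiFunction μ z ∈ Ioo (-(μ univ).toReal) 0 := by
  have hint := integrable_psiFunction_integrand (hμ.mono fun x hx => hx.le) hz.le
  have hzx : ∀ᵐ x ∂μ, z * x < 0 := hμ.mono fun x hx => mul_neg_of_neg_of_pos hz hx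
  constructor
  · have := integral_pos_of_ae_pos hμ0
      (hzx.mono fun x hx => show 0 < z * x / (1 - z * x) + 1 by
        have hpos : 0 < 1 - z * x := by linarith
        rw [div_add_one hpos.ne', add_sub_cancel]
        exact one_div_pos.2 hpos)
      (hint.add (integrable_const 1))
    rw [integral_add hint (integrable_const 1), integral_const, smul_eq_mul, mul_one,
      measureReal_def] at this
    rw [psiFunction]
    linarith
  · have := integral_pos_of_ae_pos hμ0
      (hzx.mono fun x hx => show 0 < -(z * x / (1 - z * x)) from
        neg_pos.2 (div_neg_of_neg_of_pos hx (by linarith)))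
      hint.neg
    rw [integral_neg] at this
    exact neg_pos.1 this

lemma hasDerivAt_psiFunction {b : ℝ} (hμ : ∀ᵐ x ∂μ, x ∈ Icc 0 b) (hz : z < 0) :
    HasDerivAt (psiFunction μ) (∫ x, x / (1 - z * x) ^ 2 ∂μ) z := by
  have hden : ∀ x ∈ Icc 0 b, ∀ n ∈ Iio (0 : ℝ), 1 ≤ 1 - n * x := fun x hx n hn => by
    nlinarith [mul_nonpos_of_nonpos_of_nonneg (le_of_lt hn) hx.1]
  refine (hasDerivAt_integral_of_dominated_loc_of_deriv_le (bound := fun _ => b)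
    (F := fun n x => n * x / (1 - n * x)) (F' := fun n x => x / (1 - n * x) ^ 2)
    (Iio_mem_nhds hz) (Eventually.of_forall fun n => Measurable.aestronglyMeasurable (by fun_prop))
    (integrable_psiFunction_integrand (hμ.mono fun x hx => hx.1) hz.le)
    (Measurable.aestronglyMeasurable (by fun_prop)) ?_ (integrable_const b) ?_).2
  · filter_upwards [hμ] with x hx n hn
    have h1 : 1 ≤ (1 - n * x) ^ 2 := one_le_pow₀ (hden x hx n hn)
    rw [Real.norm_of_nonneg (div_nonneg hx.1 (by positivity))]
    exact (div_le_self hx.1 h1).trans hx.2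
  · filter_upwards [hμ] with x hx n hn
    have hne : 1 - n * x ≠ 0 := (zero_lt_one.trans_le (hden x hx n hn)).ne'
    refine ((hasDerivAt_mul_const x).fun_div ((hasDerivAt_mul_const x).const_sub 1)
      hne).congr_deriv ?_
    field_simp
    ring

lemma hasDerivAt_psiFunction_neg {b w : ℝ} (hμ : ∀ᵐ x ∂μ, x ∈ Icc 0 b) (hw : 0 < w) :
    HasDerivAt (fun w => psiFunction μ (-w)) (-∫ x, x / (1 + w * x) ^ 2 ∂μ) w :=
  ((hasDerivAt_psiFunction hμ (neg_lt_zero.2 hw)).comp w (hasDerivAt_neg w)).congr_deriv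
    (by simp)

lemma image_psiFunction_neg_Ioi (hμ0 : μ ≠ 0) (hμ : ∀ᵐ x ∂μ, 0 < x) {χ : ℝ → ℝ}
    (hχneg : ∀ u ∈ Ioo (-(μ univ).toReal) 0, χ u < 0)
    (hχ : ∀ u ∈ Ioo (-(μ univ).toReal) 0, psiFunction μ (χ u) = u) :
    (fun w => psiFunction μ (-w)) '' Ioi 0 = Ioo (-(μ univ).toReal) 0 := by
  refine Subset.antisymm ?_ fun u hu => ⟨-χ u, neg_pos.2 (hχneg u hu), by simp [hχ u hu]⟩
  rintro _ ⟨w, hw, rfl⟩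
  exact psiFunction_mem_Ioo hμ0 hμ (neg_lt_zero.2 hw)

end psiFunction

lemma IsCompact.exists_subset_Icc_of_subset_Ioi {K : Set ℝ} (hK : IsCompact K)
    (hKpos : K ⊆ Ioi 0) : ∃ a b, 0 < a ∧ K ⊆ Icc a b := by
  rcases K.eq_empty_or_nonempty with rfl | hne
  · exact ⟨1, 1, one_pos, empty_subset _⟩
  · exact ⟨sInf K, sSup K, hKpos (hK.sInf_mem hne),
      fun x hx => ⟨csInf_le hK.bddBelow hx, le_csSup hK.bddAbove hx⟩⟩

/-- Let `μ` be a nonzero finite Borel measure on `ℝ` whose support is a compact subset `K`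
of `(0,∞)`, let `t = μ(ℝ) > 0`, let `ψ(z) = ∫ z·x/(1 − z·x) dμ(x)` for `z < 0`, and let
`χ : (−t, 0) → (−∞, 0)` denote the inverse of the bijection `ψ : (−∞,0) → (−t,0)`.
Then the improper integral `∫_{−t}^0 log(−χ(u)) du` converges, and
`∫ log x dμ(x) = −∫_{−t}^0 log(−χ(u)) du`. -/
theorem stmt7 (μ : Measure ℝ) [IsFiniteMeasure μ] (hμ : μ ≠ 0)
    (K : Set ℝ) (hK : IsCompact K) (hKpos : K ⊆ Set.Ioi 0) (hμK : μ Kᶜ = 0)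
    (χ : ℝ → ℝ)
    (hχneg : ∀ u ∈ Set.Ioo (-(μ Set.univ).toReal) 0, χ u < 0)
    (hχright : ∀ u ∈ Set.Ioo (-(μ Set.univ).toReal) 0,
      ∫ x, (χ u) * x / (1 - (χ u) * x) ∂μ = u)
    (hχleft : ∀ z < (0 : ℝ), χ (∫ x, z * x / (1 - z * x) ∂μ) = z) :
    IntegrableOn (fun u : ℝ => Real.log (-(χ u)))
      (Set.Ioo (-(μ Set.univ).toReal) 0) ∧
    ∫ x, Real.log x ∂μ =
      -∫ u in Set.Ioo (-(μ Set.univ).toReal) 0, Real.log (-(χ u)) := by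
  obtain ⟨a, b, ha, hKab⟩ := hK.exists_subset_Icc_of_subset_Ioi hKpos
  have hμab : ∀ᵐ x ∂μ, x ∈ Icc a b := mem_of_superset (mem_ae_iff.2 hμK) hKab
  have hμpos : ∀ᵐ x ∂μ, 0 < x := hμab.mono fun x hx => ha.trans_le hx.1
  have hχψ : ∀ z < 0, χ (psiFunction μ z) = z := hχleft
  set g : ℝ → ℝ := fun w => psiFunction μ (-w)
  have hg_deriv : ∀ w ∈ Ioi (0 : ℝ),
      HasDerivWithinAt g (-∫ x, x / (1 + w * x) ^ 2 ∂μ) (Ioi 0) w := fun w hw =>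
    (hasDerivAt_psiFunction_neg (hμab.mono fun x hx => ⟨(ha.trans_le hx.1).le, hx.2⟩)
      hw).hasDerivWithinAt
  have hg_inj : InjOn g (Ioi 0) := fun w hw w' hw' h => neg_inj.1 <| by
    rw [← hχψ (-w) (neg_lt_zero.2 hw), ← hχψ (-w') (neg_lt_zero.2 hw')]
    exact congrArg χ h
  have hlog : EqOn (fun w => |-∫ x, x / (1 + w * x) ^ 2 ∂μ| • log (-χ (g w)))
      (fun w => (∫ x, x / (1 + w * x) ^ 2 ∂μ) * log w) (Ioi 0) := fun w (hw : 0 < w) => by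
    have hnonneg : 0 ≤ ∫ x, x / (1 + w * x) ^ 2 ∂μ :=
      integral_nonneg_of_ae (hμpos.mono fun x hx => by positivity)
    simp only [g, abs_neg, abs_of_nonneg hnonneg, smul_eq_mul, hχψ (-w) (neg_lt_zero.2 hw),
      neg_neg]
  rw [← image_psiFunction_neg_Ioi hμ hμpos hχneg hχright,
    integrableOn_image_iff_integrableOn_abs_deriv_smul measurableSet_Ioi hg_deriv hg_inj,
    integral_image_eq_integral_abs_deriv_smul measurableSet_Ioi hg_deriv hg_inj,
    integrableOn_congr_fun hlog measurableSet_Ioi, setIntegral_congr_fun measurableSet_Ioi hlog,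
    integral_integral_logKernel ha hμab, neg_neg]
  exact ⟨integrableOn_integral_logKernel ha hμab, rfl⟩
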